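/- arXiv:2105.01558 — 2 statements merged into one kernel-verified Lean document; each statement's English description precedes it below -/
import Mathlib

section
/- Let δ > 0, 0 < α < 1, κ > 0, ρ > 0, and define ω²(ξ) = (2κ/(ρ δ^{2α})) ∫_{-1}^{1} (1 - cos(ξ δ z))/|z|^{1+2α} dz. Then lim_{ξ → +∞} |ξ|^{-2α} ω²(ξ) = (4κ/ρ) ∫_0^{+∞} (1 - cos τ)/τ^{1+2α} dτ. -/
open MeasureTheory Filter

/-- The square of the peridynamic dispersion relation. -/
noncomputable def omegaSq (κ ρ δ α ξ : ℝ) : ℝ :=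
  (2 * κ / (ρ * δ ^ (2 * α))) *
    ∫ z in (-1 : ℝ)..1, (1 - Real.cos (ξ * δ * z)) / |z| ^ (1 + 2 * α)

lemma integrableF {α : ℝ} (hα : 0 < α) (hα1 : α < 1) :
    IntegrableOn (fun τ : ℝ => (1 - Real.cos τ) / τ ^ (1 + 2 * α)) (Set.Ioi 0) := by
  have hcont : ∀ s : Set ℝ, s ⊆ Set.Ioi 0 →
      ContinuousOn (fun τ : ℝ => (1 - Real.cos τ) / τ ^ (1 + 2 * α)) s := by
    intro s hs
    exact ContinuousOn.div
      ((continuous_const.sub Real.continuous_cos).continuousOn)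
      (ContinuousOn.rpow_const continuousOn_id (fun x hx => Or.inl (ne_of_gt (hs hx))))
      (fun x hx => (Real.rpow_pos_of_pos (hs hx) _).ne')
  have h1 : IntegrableOn (fun τ : ℝ => (1 - Real.cos τ) / τ ^ (1 + 2 * α)) (Set.Ioc 0 1) := by
    have hg : IntegrableOn (fun τ : ℝ => τ ^ (1 - 2 * α) / 2) (Set.Ioc (0:ℝ) 1) := by
      have h := (intervalIntegral.intervalIntegrable_rpow' (a := 0) (b := 1)
        (r := 1 - 2 * α) (by linarith)).div_const 2
      rwa [intervalIntegrable_iff, Set.uIoc_of_le (by norm_num : (0:ℝ) ≤ 1)] at h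
    refine Integrable.mono' hg ((hcont _ Set.Ioc_subset_Ioi_self).aestronglyMeasurable measurableSet_Ioc) ?_
    filter_upwards [ae_restrict_mem measurableSet_Ioc] with τ hτ
    have hτ0 : (0:ℝ) < τ := hτ.1
    have hp : (0:ℝ) < τ ^ (1 + 2 * α) := Real.rpow_pos_of_pos hτ0 _
    have hcos : 1 - Real.cos τ ≤ τ ^ 2 / 2 := by
      nlinarith [Real.one_sub_sq_div_two_le_cos (x := τ)]
    have hnn : 0 ≤ (1 - Real.cos τ) / τ ^ (1 + 2 * α) :=
      div_nonneg (by nlinarith [Real.cos_le_one τ]) hp.le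
    rw [Real.norm_eq_abs, abs_of_nonneg hnn]
    calc (1 - Real.cos τ) / τ ^ (1 + 2 * α) ≤ (τ ^ 2 / 2) / τ ^ (1 + 2 * α) := by gcongr
      _ = τ ^ (1 - 2 * α) / 2 := by
          rw [show (1 - 2*α) = (2:ℝ) - (1 + 2*α) by ring, Real.rpow_sub hτ0,
            show ((2:ℝ)) = ((2:ℕ):ℝ) by norm_num, Real.rpow_natCast]
          ring
  have h2 : IntegrableOn (fun τ : ℝ => (1 - Real.cos τ) / τ ^ (1 + 2 * α)) (Set.Ioi 1) := by
    have hg : IntegrableOn (fun τ : ℝ => 2 * τ ^ (-(1 + 2 * α))) (Set.Ioi (1:ℝ)) :=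
      (integrableOn_Ioi_rpow_of_lt (by linarith) one_pos).const_mul 2
    refine Integrable.mono' hg ((hcont _ (Set.Ioi_subset_Ioi zero_le_one)).aestronglyMeasurable measurableSet_Ioi) ?_
    filter_upwards [ae_restrict_mem measurableSet_Ioi] with τ hτ
    have hτ0 : (0:ℝ) < τ := lt_trans one_pos hτ
    have hp : (0:ℝ) < τ ^ (1 + 2 * α) := Real.rpow_pos_of_pos hτ0 _
    have hnn : 0 ≤ (1 - Real.cos τ) / τ ^ (1 + 2 * α) :=
      div_nonneg (by nlinarith [Real.cos_le_one τ]) hp.le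
    rw [Real.norm_eq_abs, abs_of_nonneg hnn, Real.rpow_neg hτ0.le, ← div_eq_mul_inv]
    gcongr
    nlinarith [Real.neg_one_le_cos τ]
  have := h1.union h2
  rwa [Set.Ioc_union_Ioi_eq_Ioi zero_le_one] at this

lemma omegaSq_eq {κ ρ δ α : ℝ} (hρ : 0 < ρ) (hδ : 0 < δ) (hα : 0 < α) (hα1 : α < 1)
    {ξ : ℝ} (hξ : 0 < ξ) :
    |ξ| ^ (-(2 * α)) * omegaSq κ ρ δ α ξ =
      (4 * κ / ρ) * ∫ τ in (0:ℝ)..(ξ * δ), (1 - Real.cos τ) / τ ^ (1 + 2 * α) := by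
  set c := ξ * δ with hcdef
  have hc : 0 < c := mul_pos hξ hδ
  set F : ℝ → ℝ := fun τ => (1 - Real.cos τ) / τ ^ (1 + 2 * α) with hF
  -- equality of integrands on [0,1]
  have hEq : Set.EqOn (fun z : ℝ => (1 - Real.cos (ξ * δ * z)) / |z| ^ (1 + 2 * α))
      (fun z : ℝ => c ^ (1 + 2 * α) * F (c * z)) (Set.uIcc (0:ℝ) 1) := by
    intro z hz
    rw [Set.uIcc_of_le (by norm_num : (0:ℝ) ≤ 1)] at hz
    rcases eq_or_lt_of_le hz.1 with h0 | h0
    · simp [F, ← h0, Real.cos_zero]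
    · have habs : |z| = z := abs_of_pos h0
      have hmul : (c * z) ^ (1 + 2 * α) = c ^ (1 + 2 * α) * z ^ (1 + 2 * α) :=
        Real.mul_rpow hc.le h0.le
      have hcp : (0:ℝ) < c ^ (1 + 2 * α) := Real.rpow_pos_of_pos hc _
      have hzp : (0:ℝ) < z ^ (1 + 2 * α) := Real.rpow_pos_of_pos h0 _
      simp only [F, habs, hmul, hcdef]
      rw [mul_assoc ξ δ z]
      field_simp
      rw [Real.mul_rpow (mul_pos hξ hδ).le h0.le]
      ring
  -- interval integrability of F on 0..c and of the composition
  have hFc : IntervalIntegrable F volume 0 c := by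
    rw [intervalIntegrable_iff, Set.uIoc_of_le hc.le]
    exact (integrableF hα hα1).mono_set Set.Ioc_subset_Ioi_self
  have hcomp : IntervalIntegrable (fun z => F (c * z)) volume 0 1 := by
    have h := hFc.comp_mul_left (c := c)
    simpa [div_self hc.ne'] using h
  -- interval integrability of g on 0..1 and -1..0
  have hg1 : IntervalIntegrable
      (fun z : ℝ => (1 - Real.cos (ξ * δ * z)) / |z| ^ (1 + 2 * α)) volume 0 1 := by
    have h := hcomp.const_mul (c ^ (1 + 2 * α))
    rw [intervalIntegrable_iff, Set.uIoc_of_le (zero_le_one)] at h ⊢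
    exact h.congr_fun
      (fun z hz => (hEq (by rw [Set.uIcc_of_le zero_le_one]; exact Set.Ioc_subset_Icc_self hz)).symm)
      measurableSet_Ioc
  have geven : ∀ x : ℝ, (1 - Real.cos (ξ * δ * (-x))) / |(-x)| ^ (1 + 2 * α)
      = (1 - Real.cos (ξ * δ * x)) / |x| ^ (1 + 2 * α) := by
    intro x; rw [mul_neg, Real.cos_neg, abs_neg]
  have hgneg : IntervalIntegrable
      (fun z : ℝ => (1 - Real.cos (ξ * δ * z)) / |z| ^ (1 + 2 * α)) volume (-1) 0 := by
    have h := (IntervalIntegrable.iff_comp_neg).mp hg1.symm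
    simp only [geven, neg_zero] at h
    exact h
  -- split and symmetry
  have hneg : (∫ z in (-1:ℝ)..0, (1 - Real.cos (ξ * δ * z)) / |z| ^ (1 + 2 * α))
      = ∫ z in (0:ℝ)..1, (1 - Real.cos (ξ * δ * z)) / |z| ^ (1 + 2 * α) := by
    have h := intervalIntegral.integral_comp_neg
      (a := 0) (b := 1) (fun z : ℝ => (1 - Real.cos (ξ * δ * z)) / |z| ^ (1 + 2 * α))
    simp only [geven, neg_zero] at h
    rw [← h]
  have hsplit : (∫ z in (-1:ℝ)..1, (1 - Real.cos (ξ * δ * z)) / |z| ^ (1 + 2 * α))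
      = 2 * ∫ z in (0:ℝ)..1, (1 - Real.cos (ξ * δ * z)) / |z| ^ (1 + 2 * α) := by
    rw [← intervalIntegral.integral_add_adjacent_intervals hgneg hg1, hneg]; ring
  -- substitution
  have hsub : (∫ z in (0:ℝ)..1, (1 - Real.cos (ξ * δ * z)) / |z| ^ (1 + 2 * α))
      = c ^ (2 * α) * ∫ τ in (0:ℝ)..c, F τ := by
    rw [intervalIntegral.integral_congr hEq, intervalIntegral.integral_const_mul,
      intervalIntegral.integral_comp_mul_left F hc.ne']
    simp only [mul_zero, mul_one, smul_eq_mul, ← mul_assoc]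
    congr 1
    rw [← Real.rpow_neg_one c, ← Real.rpow_add hc]
    norm_num
  -- assemble
  have hξa : |ξ| = ξ := abs_of_pos hξ
  have hcr : c ^ (2 * α) = ξ ^ (2 * α) * δ ^ (2 * α) := Real.mul_rpow hξ.le hδ.le
  have hξp : (0:ℝ) < ξ ^ (2 * α) := Real.rpow_pos_of_pos hξ _
  have hδp : (0:ℝ) < δ ^ (2 * α) := Real.rpow_pos_of_pos hδ _
  rw [omegaSq, hsplit, hsub, hξa, Real.rpow_neg hξ.le, hcr]
  field_simp
  ring

theorem omegaSq_asymptotic_infty (κ ρ δ α : ℝ) (hκ : 0 < κ) (hρ : 0 < ρ)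
    (hδ : 0 < δ) (hα : 0 < α) (hα1 : α < 1) :
    Tendsto (fun ξ : ℝ => |ξ| ^ (-(2 * α)) * omegaSq κ ρ δ α ξ) atTop
      (nhds ((4 * κ / ρ) *
        ∫ τ in Set.Ioi (0 : ℝ), (1 - Real.cos τ) / τ ^ (1 + 2 * α))) := by
  have hlim : Tendsto (fun ξ : ℝ => ∫ τ in (0:ℝ)..(ξ * δ), (1 - Real.cos τ) / τ ^ (1 + 2 * α))
      atTop (nhds (∫ τ in Set.Ioi (0:ℝ), (1 - Real.cos τ) / τ ^ (1 + 2 * α))) :=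
    intervalIntegral_tendsto_integral_Ioi 0 (integrableF hα hα1)
      (Tendsto.atTop_mul_const hδ tendsto_id)
  refine Tendsto.congr' ?_ (hlim.const_mul (4 * κ / ρ))
  filter_upwards [eventually_gt_atTop (0:ℝ)] with ξ hξ
  exact (omegaSq_eq hρ hδ hα hα1 hξ).symm
end

section
/- Let 0 < α < 1, κ > 0, ρ > 0, δ > 0 and define ω²(ξ) = (2κ/(ρ δ^{2α})) ∫_{-1}^{1} (1 - cos(ξ δ z))/|z|^{1+2α} dz. Then there exists a constant C > 0, independent of all the parameters, such that for all ξ ∈ ℝ, ω²(ξ) ≤ (Cκ/(ρ δ^{2α})) [ (|ξ|² δ²/(1-α)) min{1/(|ξ| δ)^{2-2α}, 1} + (1/α)·χ_{(0,1)}(2/(|ξ|δ))·((|ξ|δ/2)^{2α} - 1) ]. -/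
open MeasureTheory

namespace OmegaSqAux

lemma one_sub_cos_le_sq (t : ℝ) : 1 - Real.cos t ≤ t ^ 2 / 2 := by
  have := Real.one_sub_sq_div_two_le_cos (x := t); linarith

lemma one_sub_cos_nonneg (t : ℝ) : 0 ≤ 1 - Real.cos t := by
  have := Real.cos_le_one t; linarith

lemma one_sub_cos_le_two (t : ℝ) : 1 - Real.cos t ≤ 2 := by
  have := Real.neg_one_le_cos t; linarith

lemma f_nonneg {α r z : ℝ} (hz : 0 ≤ z) :
    0 ≤ (1 - Real.cos (r * z)) / z ^ (1 + 2 * α) :=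
  div_nonneg (one_sub_cos_nonneg _) (Real.rpow_nonneg hz _)

lemma g_nonneg {α r z : ℝ} (hz : 0 ≤ z) :
    0 ≤ r ^ 2 / 2 * z ^ (1 - 2 * α) :=
  mul_nonneg (by positivity) (Real.rpow_nonneg hz _)

lemma f_le_g {α r z : ℝ} (hz : 0 < z) :
    (1 - Real.cos (r * z)) / z ^ (1 + 2 * α) ≤ r ^ 2 / 2 * z ^ (1 - 2 * α) := by
  have hzp : (0:ℝ) < z ^ (1 + 2 * α) := Real.rpow_pos_of_pos hz _
  rw [div_le_iff₀ hzp]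
  have h1 : 1 - Real.cos (r * z) ≤ (r * z) ^ 2 / 2 := one_sub_cos_le_sq _
  have h2 : z ^ (1 - 2 * α) * z ^ (1 + 2 * α) = z ^ 2 := by
    rw [← Real.rpow_add hz, show (1 - 2*α) + (1 + 2*α) = ((2:ℕ):ℝ) by push_cast; ring,
      Real.rpow_natCast]
  calc 1 - Real.cos (r * z) ≤ (r * z) ^ 2 / 2 := h1
    _ = r ^ 2 / 2 * (z ^ (1 - 2 * α) * z ^ (1 + 2 * α)) := by rw [h2]; ring
    _ = r ^ 2 / 2 * z ^ (1 - 2 * α) * z ^ (1 + 2 * α) := by ring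

lemma f_measurable {α : ℝ} (hα0 : 0 < α) (r : ℝ) :
    Measurable (fun z : ℝ => (1 - Real.cos (r * z)) / z ^ (1 + 2 * α)) := by
  exact (measurable_const.sub (Real.measurable_cos.comp (measurable_const_mul r))).div
    ((Real.continuous_rpow_const (by linarith : (0:ℝ) ≤ 1 + 2 * α)).measurable)

lemma intInt {α : ℝ} (hα0 : 0 < α) (hα1 : α < 1) (r : ℝ) :
    IntervalIntegrable (fun z : ℝ => (1 - Real.cos (r * z)) / z ^ (1 + 2 * α))
      volume 0 1 := by
  have hg : IntervalIntegrable (fun z : ℝ => r ^ 2 / 2 * z ^ (1 - 2 * α)) volume 0 1 :=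
    (intervalIntegral.intervalIntegrable_rpow' (by linarith)).const_mul _
  refine hg.mono_fun' ((f_measurable hα0 r).aestronglyMeasurable) ?_
  rw [Set.uIoc_of_le (by norm_num : (0:ℝ) ≤ 1)]
  filter_upwards [ae_restrict_mem measurableSet_Ioc] with z hz
  rw [Real.norm_eq_abs, abs_of_nonneg (f_nonneg (le_of_lt hz.1))]
  exact f_le_g hz.1

/-- The core analytic bound. -/
lemma core {α : ℝ} (hα0 : 0 < α) (hα1 : α < 1) {r : ℝ} (hr : 0 ≤ r) :
    ∫ z in (0:ℝ)..1, (1 - Real.cos (r * z)) / z ^ (1 + 2 * α) ≤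
      r ^ 2 / (1 - α) * min (1 / r ^ (2 - 2 * α)) 1 +
        1 / α * (Set.Ioo (0 : ℝ) 1).indicator (fun _ => 1) (2 / r) *
          ((r / 2) ^ (2 * α) - 1) := by
  have h1α : (0:ℝ) < 1 - α := by linarith
  rcases eq_or_lt_of_le hr with h0 | hrpos
  · -- r = 0
    rw [← h0]
    simp [Real.cos_zero, Real.zero_rpow (ne_of_gt (by linarith : (0:ℝ) < 2 - 2*α)),
      Set.indicator_of_notMem (by simp : (0:ℝ) ∉ Set.Ioo (0:ℝ) 1)]
  rcases le_or_gt r 2 with hr2 | hr2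
  · -- 0 < r ≤ 2 : indicator vanishes
    have hind : (Set.Ioo (0:ℝ) 1).indicator (fun _ => (1:ℝ)) (2 / r) = 0 := by
      apply Set.indicator_of_notMem
      have : (1:ℝ) ≤ 2 / r := (one_le_div hrpos).mpr hr2
      simp only [Set.mem_Ioo, not_and, not_lt]
      intro _; exact this
    rw [hind]
    have hmin : (1:ℝ)/4 ≤ min (1 / r ^ (2 - 2 * α)) 1 := by
      refine le_min ?_ (by norm_num)
      have h4 : r ^ (2 - 2*α) ≤ 4 := by
        calc r ^ (2 - 2*α) ≤ 2 ^ (2 - 2*α) :=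
              Real.rpow_le_rpow hr hr2 (by linarith)
          _ ≤ 2 ^ ((2:ℕ):ℝ) :=
              Real.rpow_le_rpow_of_exponent_le one_le_two (by push_cast; linarith)
          _ = 4 := by rw [Real.rpow_natCast]; norm_num
      have hpos : 0 < r ^ (2 - 2*α) := Real.rpow_pos_of_pos hrpos _
      exact one_div_le_one_div_of_le hpos h4
    have hgint : IntervalIntegrable (fun z : ℝ => r ^ 2 / 2 * z ^ (1 - 2 * α)) volume 0 1 :=
      (intervalIntegral.intervalIntegrable_rpow' (by linarith)).const_mul _
    have hstep : ∫ z in (0:ℝ)..1, (1 - Real.cos (r * z)) / z ^ (1 + 2 * α) ≤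
        ∫ z in (0:ℝ)..1, r ^ 2 / 2 * z ^ (1 - 2 * α) := by
      refine intervalIntegral.integral_mono_on (by norm_num) (intInt hα0 hα1 r) hgint ?_
      intro z hz
      rcases eq_or_lt_of_le hz.1 with h | h
      · rw [← h]
        simpa using g_nonneg (le_refl (0:ℝ)) (α := α) (r := r)
      · exact f_le_g h
    have hval : ∫ z in (0:ℝ)..1, r ^ 2 / 2 * z ^ (1 - 2 * α) = r ^ 2 / (4 * (1 - α)) := by
      rw [intervalIntegral.integral_const_mul,
        integral_rpow (Or.inl (by linarith)),
        show (1 - 2*α) + 1 = 2 - 2*α by ring, Real.one_rpow,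
        Real.zero_rpow (ne_of_gt (by linarith : (0:ℝ) < 2 - 2*α))]
      have h2 : (2:ℝ) - 2*α ≠ 0 := ne_of_gt (by linarith)
      have h3 : (1:ℝ) - α ≠ 0 := ne_of_gt h1α
      field_simp
      ring
    calc ∫ z in (0:ℝ)..1, (1 - Real.cos (r * z)) / z ^ (1 + 2 * α)
        ≤ r ^ 2 / (4 * (1 - α)) := by rw [← hval]; exact hstep
      _ = r ^ 2 / (1 - α) * (1/4) := by
          have h3 : (1:ℝ) - α ≠ 0 := ne_of_gt h1α
          field_simp
      _ ≤ r ^ 2 / (1 - α) * min (1 / r ^ (2 - 2 * α)) 1 := by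
          exact mul_le_mul_of_nonneg_left hmin (by positivity)
      _ = r ^ 2 / (1 - α) * min (1 / r ^ (2 - 2 * α)) 1 + 1 / α * 0 * ((r / 2) ^ (2 * α) - 1) := by
          ring
  · -- r > 2
    set c : ℝ := 2 / r with hc
    have hc0 : 0 < c := by positivity
    have hc1 : c < 1 := (div_lt_one (by linarith)).mpr hr2
    have hind : (Set.Ioo (0:ℝ) 1).indicator (fun _ => (1:ℝ)) (2 / r) = 1 :=
      Set.indicator_of_mem (Set.mem_Ioo.mpr ⟨hc0, hc1⟩) _
    have hmin : min (1 / r ^ (2 - 2 * α)) 1 = 1 / r ^ (2 - 2 * α) := by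
      refine min_eq_left ?_
      have h1r : (1:ℝ) ≤ r ^ (2 - 2*α) := by
        calc (1:ℝ) = 1 ^ (2 - 2*α) := (Real.one_rpow _).symm
          _ ≤ r ^ (2 - 2*α) := Real.rpow_le_rpow (by norm_num) (by linarith) (by linarith)
      rw [div_le_one (by positivity)]; exact h1r
    rw [hind, hmin]
    have hI := intInt hα0 hα1 r (α := α)
    have hI1 : IntervalIntegrable (fun z : ℝ => (1 - Real.cos (r * z)) / z ^ (1 + 2 * α))
        volume 0 c := by
      refine hI.mono_set ?_
      rw [Set.uIcc_of_le hc0.le, Set.uIcc_of_le (by norm_num : (0:ℝ) ≤ 1)]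
      exact Set.Icc_subset_Icc le_rfl hc1.le
    have hI2 : IntervalIntegrable (fun z : ℝ => (1 - Real.cos (r * z)) / z ^ (1 + 2 * α))
        volume c 1 := by
      refine hI.mono_set ?_
      rw [Set.uIcc_of_le hc1.le, Set.uIcc_of_le (by norm_num : (0:ℝ) ≤ 1)]
      exact Set.Icc_subset_Icc hc0.le le_rfl
    rw [← intervalIntegral.integral_add_adjacent_intervals hI1 hI2]
    have hrp : 0 < r ^ (2 - 2*α) := Real.rpow_pos_of_pos hrpos _
    -- bound on [0, c]
    have hgint : IntervalIntegrable (fun z : ℝ => r ^ 2 / 2 * z ^ (1 - 2 * α)) volume 0 c :=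
      (intervalIntegral.intervalIntegrable_rpow' (by linarith)).const_mul _
    have hb1 : ∫ z in (0:ℝ)..c, (1 - Real.cos (r * z)) / z ^ (1 + 2 * α) ≤
        r ^ 2 / (1 - α) * (1 / r ^ (2 - 2 * α)) := by
      have hstep : ∫ z in (0:ℝ)..c, (1 - Real.cos (r * z)) / z ^ (1 + 2 * α) ≤
          ∫ z in (0:ℝ)..c, r ^ 2 / 2 * z ^ (1 - 2 * α) := by
        refine intervalIntegral.integral_mono_on hc0.le hI1 hgint ?_
        intro z hz
        rcases eq_or_lt_of_le hz.1 with h | h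
        · rw [← h]
          simpa using g_nonneg (le_refl (0:ℝ)) (α := α) (r := r)
        · exact f_le_g h
      have hval : ∫ z in (0:ℝ)..c, r ^ 2 / 2 * z ^ (1 - 2 * α) =
          r ^ 2 / 2 * (c ^ (2 - 2*α) / (2 - 2*α)) := by
        rw [intervalIntegral.integral_const_mul,
          integral_rpow (Or.inl (by linarith)),
          show (1 - 2*α) + 1 = 2 - 2*α by ring,
          Real.zero_rpow (ne_of_gt (by linarith : (0:ℝ) < 2 - 2*α)), sub_zero]
      have hcpow : c ^ (2 - 2*α) = 2 ^ (2 - 2*α) / r ^ (2 - 2*α) := by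
        rw [hc, Real.div_rpow (by norm_num) hrpos.le]
      have h2pow : (2:ℝ) ^ (2 - 2*α) ≤ 4 := by
        calc (2:ℝ) ^ (2 - 2*α) ≤ 2 ^ ((2:ℕ):ℝ) :=
              Real.rpow_le_rpow_of_exponent_le one_le_two (by push_cast; linarith)
          _ = 4 := by rw [Real.rpow_natCast]; norm_num
      calc ∫ z in (0:ℝ)..c, (1 - Real.cos (r * z)) / z ^ (1 + 2 * α)
          ≤ r ^ 2 / 2 * (c ^ (2 - 2*α) / (2 - 2*α)) := by rw [← hval]; exact hstep
        _ = r ^ 2 * (2 ^ (2 - 2*α)) / (4 * (1 - α) * r ^ (2 - 2*α)) := by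
            have h2 : (2:ℝ) - 2*α ≠ 0 := ne_of_gt (by linarith)
            have h3 : (1:ℝ) - α ≠ 0 := ne_of_gt h1α
            rw [hcpow]
            field_simp
            ring
        _ ≤ r ^ 2 * 4 / (4 * (1 - α) * r ^ (2 - 2*α)) := by
            have hD : 0 < 4 * (1 - α) * r ^ (2 - 2*α) :=
              mul_pos (mul_pos (by norm_num) h1α) hrp
            exact (div_le_div_iff_of_pos_right hD).mpr
              (mul_le_mul_of_nonneg_left h2pow (by positivity))
        _ = r ^ 2 / (1 - α) * (1 / r ^ (2 - 2 * α)) := by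
            have h3 : (1:ℝ) - α ≠ 0 := ne_of_gt h1α
            field_simp
    -- bound on [c, 1]
    have hhint : IntervalIntegrable (fun z : ℝ => 2 * z ^ (-(1 + 2*α))) volume c 1 := by
      refine IntervalIntegrable.const_mul ?_ 2
      refine intervalIntegral.intervalIntegrable_rpow (Or.inr ?_)
      rw [Set.uIcc_of_le hc1.le]
      intro h
      exact absurd h.1 (by linarith)
    have hb2 : ∫ z in c..1, (1 - Real.cos (r * z)) / z ^ (1 + 2 * α) ≤
        1 / α * 1 * ((r / 2) ^ (2 * α) - 1) := by
      have hstep : ∫ z in c..1, (1 - Real.cos (r * z)) / z ^ (1 + 2 * α) ≤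
          ∫ z in c..1, 2 * z ^ (-(1 + 2*α)) := by
        refine intervalIntegral.integral_mono_on hc1.le hI2 hhint ?_
        intro z hz
        have hz0 : 0 < z := lt_of_lt_of_le hc0 hz.1
        have hzp : (0:ℝ) < z ^ (1 + 2 * α) := Real.rpow_pos_of_pos hz0 _
        rw [Real.rpow_neg hz0.le, div_le_iff₀ hzp, mul_assoc,
          inv_mul_cancel₀ (ne_of_gt hzp), mul_one]
        exact one_sub_cos_le_two _
      have hval : ∫ z in c..1, 2 * z ^ (-(1 + 2*α)) =
          (c ^ (-(2*α)) - 1) / α := by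
        rw [intervalIntegral.integral_const_mul,
          integral_rpow (Or.inr ⟨by
              intro h
              have := neg_injective h
              linarith,
            by
              rw [Set.uIcc_of_le hc1.le]
              intro h
              exact absurd h.1 (not_le.mpr hc0)⟩),
          show -(1 + 2*α) + 1 = -(2*α) by ring, Real.one_rpow]
        have h4 : α ≠ 0 := ne_of_gt hα0
        field_simp
        ring
      have hcv : c ^ (-(2*α)) = (r / 2) ^ (2 * α) := by
        rw [show (r/2:ℝ) = c⁻¹ by rw [hc, inv_div], Real.inv_rpow hc0.le,
          ← Real.rpow_neg hc0.le]
      rw [hval] at hstep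
      calc ∫ z in c..1, (1 - Real.cos (r * z)) / z ^ (1 + 2 * α)
          ≤ (c ^ (-(2*α)) - 1) / α := hstep
        _ = 1 / α * 1 * ((r / 2) ^ (2 * α) - 1) := by rw [hcv]; ring
    exact add_le_add hb1 hb2

lemma split {δ α : ℝ} (ξ : ℝ) (hδ : 0 < δ) (hα0 : 0 < α) (hα1 : α < 1) :
    ∫ z in (-1:ℝ)..1, (1 - Real.cos (ξ * δ * z)) / |z| ^ (1 + 2 * α)
      = 2 * ∫ z in (0:ℝ)..1, (1 - Real.cos ((|ξ| * δ) * z)) / z ^ (1 + 2 * α) := by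
  set r : ℝ := |ξ| * δ with hrdef
  set F : ℝ → ℝ := fun z => (1 - Real.cos (ξ * δ * z)) / |z| ^ (1 + 2 * α) with hF
  set f : ℝ → ℝ := fun z => (1 - Real.cos (r * z)) / z ^ (1 + 2 * α) with hf
  have heqOn : ∀ z ∈ Set.Icc (0:ℝ) 1, F z = f z := by
    intro z hz
    have hz0 : 0 ≤ z := hz.1
    have habs : |ξ * δ * z| = r * z := by
      rw [abs_mul, abs_mul, abs_of_nonneg hδ.le, abs_of_nonneg hz0, hrdef]
    simp only [hF, hf]
    rw [← Real.cos_abs (ξ * δ * z), habs, abs_of_nonneg hz0]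
  have heven : ∀ z : ℝ, F (-z) = F z := by
    intro z
    simp only [hF]
    rw [mul_neg, Real.cos_neg, abs_neg]
  have hfI : IntervalIntegrable f volume 0 1 := intInt hα0 hα1 r
  have hFI1 : IntervalIntegrable F volume 0 1 := by
    rw [intervalIntegrable_iff] at hfI ⊢
    refine hfI.congr_fun ?_ measurableSet_uIoc
    intro z hz
    rw [Set.uIoc_of_le (by norm_num : (0:ℝ) ≤ 1)] at hz
    exact (heqOn z ⟨hz.1.le, hz.2⟩).symm
  have hFIneg : IntervalIntegrable F volume (-1) 0 := by
    rw [IntervalIntegrable.iff_comp_neg]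
    have hfun : (fun x => F (-x)) = F := funext heven
    rw [hfun]
    simpa using hFI1.symm
  have hneg : ∫ z in (-1:ℝ)..0, F z = ∫ z in (0:ℝ)..1, F z := by
    have h := intervalIntegral.integral_comp_neg (a := 0) (b := 1) F
    rw [neg_zero] at h
    rw [← h]
    exact intervalIntegral.integral_congr (fun z _ => heven z)
  have h01 : ∫ z in (0:ℝ)..1, F z = ∫ z in (0:ℝ)..1, f z :=
    intervalIntegral.integral_congr (fun z hz =>
      heqOn z (by rwa [Set.uIcc_of_le (by norm_num : (0:ℝ) ≤ 1)] at hz))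
  rw [← intervalIntegral.integral_add_adjacent_intervals hFIneg hFI1, hneg, h01]
  ring

end OmegaSqAux

theorem omegaSq_upper_bound :
    ∃ C : ℝ, 0 < C ∧ ∀ κ ρ δ α ξ : ℝ, 0 < κ → 0 < ρ → 0 < δ → 0 < α → α < 1 →
      omegaSq κ ρ δ α ξ ≤ (C * κ / (ρ * δ ^ (2 * α))) *
        ((|ξ| ^ 2 * δ ^ 2 / (1 - α)) *
            min (1 / (|ξ| * δ) ^ (2 - 2 * α)) 1 +
          (1 / α) * (Set.Ioo (0 : ℝ) 1).indicator (fun _ => 1) (2 / (|ξ| * δ)) *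
            ((|ξ| * δ / 2) ^ (2 * α) - 1)) := by
  refine ⟨4, by norm_num, ?_⟩
  intro κ ρ δ α ξ hκ hρ hδ hα0 hα1
  have hr : 0 ≤ |ξ| * δ := mul_nonneg (abs_nonneg ξ) hδ.le
  have hcore := OmegaSqAux.core hα0 hα1 hr
  have hD : (0:ℝ) < ρ * δ ^ (2 * α) := mul_pos hρ (Real.rpow_pos_of_pos hδ _)
  have hc4 : (0:ℝ) ≤ 4 * κ / (ρ * δ ^ (2 * α)) :=
    div_nonneg (by linarith) hD.le
  rw [omegaSq, OmegaSqAux.split ξ hδ hα0 hα1]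
  rw [show |ξ| ^ 2 * δ ^ 2 = (|ξ| * δ) ^ 2 from (mul_pow _ _ _).symm]
  calc (2 * κ / (ρ * δ ^ (2 * α))) *
        (2 * ∫ z in (0:ℝ)..1, (1 - Real.cos ((|ξ| * δ) * z)) / z ^ (1 + 2 * α))
      = (4 * κ / (ρ * δ ^ (2 * α))) *
        ∫ z in (0:ℝ)..1, (1 - Real.cos ((|ξ| * δ) * z)) / z ^ (1 + 2 * α) := by ring
    _ ≤ (4 * κ / (ρ * δ ^ (2 * α))) *
        ((|ξ| * δ) ^ 2 / (1 - α) * min (1 / (|ξ| * δ) ^ (2 - 2 * α)) 1 +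
          1 / α * (Set.Ioo (0 : ℝ) 1).indicator (fun _ => 1) (2 / (|ξ| * δ)) *
            ((|ξ| * δ / 2) ^ (2 * α) - 1)) := mul_le_mul_of_nonneg_left hcore hc4
end
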